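/- arXiv:2205.13615 — 6 statements merged into one kernel-verified Lean document; each statement's English description precedes it below -/
import Mathlib

section
/- Corollary 1.7: Assume the branching ratio is constant: π̄_x = ρ for all x ∈ X, with 0 < ρ < ∞. If f : X → ℝ is a bounded function which is λ-harmonic for the base chain, i.e. Σ_{y∈X} p(x,y)·f(y) = λ·f(x) for every x ∈ X, then its lift f̃(m) = ⟨m, f⟩ is λρ-harmonic for the branching kernel: for every population m ∈ M, ∫_M ⟨m', f⟩ dK(m)(m') = λ·ρ·⟨m, f⟩ (the integral being well defined since ∫_M ‖m'‖ dK(m)(m') = ρ‖m‖ < ∞). -/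
/-
K m is the convolution of the offspring laws K (single x 1), one for each individual of m, so
the mean of any additive functional of the population under K m is additive in m and is
determined by its means under the Π_x. For the lift a ↦ ⟨a, f⟩ that mean is
Σ_y (∫ a y dΠ_x) f y = ρ Σ_y p(x,y) f y = λρ f x; exchanging sum and integral is justified by
|⟨a, f⟩| ≤ C ‖a‖ and ∫ ‖a‖ dΠ_x = ρ < ∞.
-/

open MeasureTheory ProbabilityTheory Filter Topology
open scoped ENNReal NNReal

namespace BMC

variable {X : Type*}

/-- the population space `X →₀ ℕ` over a countable set carries the discrete σ-algebra -/
instance : MeasurableSpace (X →₀ ℕ) := ⊤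

/-- size (total mass) of a population -/
def popSize (m : X →₀ ℕ) : ℕ := m.sum fun _ k => k

/-- convolution of measures on populations: pushforward of the product measure under addition -/
noncomputable def popConv (μ ν : Measure (X →₀ ℕ)) : Measure (X →₀ ℕ) :=
  (μ.prod ν).map fun p => p.1 + p.2

open Finsupp

@[elab_as_elim]
theorem _root_.Finsupp.induction_single_one {motive : (X →₀ ℕ) → Prop} (m : X →₀ ℕ)
    (zero : motive 0) (single_one : ∀ x, motive (single x 1))
    (add : ∀ m m', motive m → motive m' → motive (m + m')) : motive m := by
  induction m using Finsupp.induction_linear with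
  | zero => exact zero
  | add m m' hm hm' => exact add m m' hm hm'
  | single x k =>
    induction k with
    | zero => simpa using zero
    | succ k ih => exact single_add x k 1 ▸ add _ _ ih (single_one x)

section Convolution

variable [Countable X] {E G : Type*} [NormedAddCommGroup E] [FunLike G (X →₀ ℕ) E]
  [AddMonoidHomClass G (X →₀ ℕ) E]

theorem integrable_popConv {μ ν : Measure (X →₀ ℕ)} [IsFiniteMeasure μ] [IsFiniteMeasure ν]
    (g : G) (hμ : Integrable g μ) (hν : Integrable g ν) : Integrable g (popConv μ ν) := by
  rw [popConv, integrable_map_measure .of_discrete (measurable_of_countable _).aemeasurable]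
  simp only [Function.comp_def, map_add]
  exact (hμ.comp_fst ν).add (hν.comp_snd μ)

theorem integral_popConv [NormedSpace ℝ E] {μ ν : Measure (X →₀ ℕ)} [IsProbabilityMeasure μ]
    [IsProbabilityMeasure ν] (g : G) (hμ : Integrable g μ) (hν : Integrable g ν) :
    ∫ a, g a ∂(popConv μ ν) = ∫ a, g a ∂μ + ∫ a, g a ∂ν := by
  rw [popConv, integral_map (measurable_of_countable _).aemeasurable .of_discrete]
  simp only [map_add]
  rw [integral_add (hμ.comp_fst ν) (hν.comp_snd μ), integral_fun_fst, integral_fun_snd]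
  simp

end Convolution

structure IsBranchingKernel (K : Kernel (X →₀ ℕ) (X →₀ ℕ)) : Prop where
  apply_zero : K 0 = Measure.dirac 0
  apply_add : ∀ m m', K (m + m') = popConv (K m) (K m')

namespace IsBranchingKernel

variable [Countable X] {E G : Type*} [NormedAddCommGroup E] [FunLike G (X →₀ ℕ) E]
  [AddMonoidHomClass G (X →₀ ℕ) E] {K : Kernel (X →₀ ℕ) (X →₀ ℕ)} [IsMarkovKernel K]

theorem integrable (hK : IsBranchingKernel K) (g : G)
    (hg : ∀ x, Integrable g (K (single x 1))) (m : X →₀ ℕ) : Integrable g (K m) := by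
  induction m using Finsupp.induction_single_one with
  | zero => rw [hK.apply_zero]; exact integrable_dirac enorm_lt_top
  | single_one x => exact hg x
  | add m m' hm hm' => rw [hK.apply_add]; exact integrable_popConv g hm hm'

theorem integral_eq_linearCombination [NormedSpace ℝ E] [CompleteSpace E]
    (hK : IsBranchingKernel K) (g : G) (hg : ∀ x, Integrable g (K (single x 1))) (m : X →₀ ℕ) :
    ∫ a, g a ∂(K m) = linearCombination ℕ (fun x => ∫ a, g a ∂(K (single x 1))) m := by
  induction m using Finsupp.induction_single_one with
  | zero => simp [hK.apply_zero]
  | single_one x => simp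
  | add m m' hm hm' =>
    rw [hK.apply_add, integral_popConv g (hK.integrable g hg m) (hK.integrable g hg m'), hm, hm',
      map_add]

end IsBranchingKernel

section Lift

/-! `linearCombination ℕ f a = Σ_x a x • f x` is the lift `⟨a, f⟩`. -/

theorem popSize_eq_tsum (a : X →₀ ℕ) : (popSize a : ℝ≥0∞) = ∑' y, (a y : ℝ≥0∞) := by
  rw [tsum_eq_sum (s := a.support) fun y hy => by simp [notMem_support_iff.mp hy]]
  simp [popSize, Finsupp.sum]

theorem linearCombination_eq_tsum (f : X → ℝ) (a : X →₀ ℕ) :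
    linearCombination ℕ f a = ∑' y, (a y : ℝ) * f y := by
  rw [tsum_eq_sum (s := a.support) fun y hy => by simp [notMem_support_iff.mp hy]]
  simp [linearCombination_apply, Finsupp.sum]

theorem abs_linearCombination_le {f : X → ℝ} {C : ℝ} (hf : ∀ x, |f x| ≤ C) (a : X →₀ ℕ) :
    |linearCombination ℕ f a| ≤ C * popSize a := by
  calc |linearCombination ℕ f a| ≤ ∑ x ∈ a.support, |(a x : ℝ) * f x| := by
        simpa [linearCombination_apply, Finsupp.sum] using
          Finset.abs_sum_le_sum_abs (fun x => (a x : ℝ) * f x) a.support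
    _ ≤ ∑ x ∈ a.support, C * a x := by
        gcongr with x
        rw [abs_mul, Nat.abs_cast, mul_comm]
        exact mul_le_mul_of_nonneg_right (hf x) (Nat.cast_nonneg _)
    _ = C * popSize a := by simp [popSize, Finsupp.sum, Finset.mul_sum]

variable [Countable X] {μ : Measure (X →₀ ℕ)}

theorem tsum_lintegral_apply_eq_lintegral_popSize :
    ∑' y, ∫⁻ a, (a y : ℝ≥0∞) ∂μ = ∫⁻ a, (popSize a : ℝ≥0∞) ∂μ := by
  simp_rw [popSize_eq_tsum]
  exact (lintegral_tsum fun _ => (measurable_of_countable _).aemeasurable).symm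

theorem integrable_linearCombination (hμ : ∫⁻ a, (popSize a : ℝ≥0∞) ∂μ ≠ ∞) {f : X → ℝ}
    {C : ℝ} (hf : ∀ x, |f x| ≤ C) : Integrable (linearCombination ℕ f) μ := by
  have hsize : Integrable (fun a => C * popSize a) μ :=
    (integrable_toReal_of_lintegral_ne_top (measurable_of_countable _).aemeasurable hμ).const_mul C
      |>.congr (.of_forall fun a => by simp)
  exact hsize.mono' .of_discrete (.of_forall (abs_linearCombination_le hf))

theorem integral_linearCombination (hμ : ∫⁻ a, (popSize a : ℝ≥0∞) ∂μ ≠ ∞) {f : X → ℝ}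
    {C : ℝ} (hf : ∀ x, |f x| ≤ C) :
    ∫ a, linearCombination ℕ f a ∂μ = ∑' y, (∫⁻ a, (a y : ℝ≥0∞) ∂μ).toReal * f y := by
  have hsummable : ∑' y, ∫⁻ a, ‖(a y : ℝ) * f y‖ₑ ∂μ ≠ ∞ := by
    refine ne_top_of_le_ne_top (ENNReal.mul_ne_top hμ (ENNReal.ofReal_ne_top (r := C))) ?_
    calc ∑' y, ∫⁻ a, ‖(a y : ℝ) * f y‖ₑ ∂μ
        ≤ ∑' y, (∫⁻ a, (a y : ℝ≥0∞) ∂μ) * ENNReal.ofReal C := by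
          refine ENNReal.tsum_le_tsum fun y => ?_
          rw [← lintegral_mul_const' _ _ ENNReal.ofReal_ne_top]
          refine lintegral_mono fun a => ?_
          rw [← ofReal_norm, Real.norm_eq_abs, abs_mul, Nat.abs_cast,
            ENNReal.ofReal_mul (Nat.cast_nonneg _), ENNReal.ofReal_natCast]
          gcongr
          exact hf y
      _ = (∫⁻ a, (popSize a : ℝ≥0∞) ∂μ) * ENNReal.ofReal C := by
          rw [ENNReal.tsum_mul_right, tsum_lintegral_apply_eq_lintegral_popSize]
  simp_rw [linearCombination_eq_tsum]
  rw [integral_tsum (fun _ => .of_discrete) hsummable]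
  refine tsum_congr fun y => ?_
  rw [integral_mul_const, integral_eq_lintegral_of_nonneg_ae (.of_forall fun _ => by positivity)
    .of_discrete]
  simp

end Lift

theorem lift_harmonic_general [Countable X]
    (Pibr : X → Measure (X →₀ ℕ))
    (K : Kernel (X →₀ ℕ) (X →₀ ℕ)) [IsMarkovKernel K]
    (hK0 : K 0 = Measure.dirac 0)
    (hKs : ∀ x : X, K (Finsupp.single x 1) = Pibr x)
    (hKadd : ∀ m m' : X →₀ ℕ, K (m + m') = popConv (K m) (K m'))
    (ρ : ℝ) (hρ : 0 < ρ)
    (hBR : ∀ x : X, ∫⁻ m, (popSize m : ℝ≥0∞) ∂(Pibr x) = ENNReal.ofReal ρ)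
    (f : X → ℝ) (C : ℝ) (hf : ∀ x, |f x| ≤ C)
    (lam : ℝ)
    (hharm : ∀ x : X,
      ∑' y : X, ((∫⁻ m, (m y : ℝ≥0∞) ∂(Pibr x)).toReal / ρ) * f y = lam * f x)
    (m : X →₀ ℕ) :
    ∫ m', (m'.sum fun x k => (k : ℝ) * f x) ∂(K m)
      = lam * ρ * (m.sum fun x k => (k : ℝ) * f x) := by
  have hK : IsBranchingKernel K := ⟨hK0, hKadd⟩
  have hsize : ∀ x, ∫⁻ a, (popSize a : ℝ≥0∞) ∂(K (single x 1)) ≠ ∞ := by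
    simp [hKs, hBR]
  have hmean : ∀ x, ∫ a, linearCombination ℕ f a ∂(K (single x 1)) = lam * ρ * f x := by
    intro x
    rw [integral_linearCombination (hsize x) hf, hKs, mul_comm lam, mul_assoc, ← hharm x,
      ← tsum_mul_left]
    exact tsum_congr fun y => by field_simp
  have hlift : ∀ a : X →₀ ℕ, (a.sum fun x k => (k : ℝ) * f x) = linearCombination ℕ f a := by
    simp [linearCombination_apply]
  simp only [hlift]
  rw [hK.integral_eq_linearCombination _ fun x => integrable_linearCombination (hsize x) hf,
    funext hmean]
  simp only [linearCombination_apply, nsmul_eq_mul, Finsupp.mul_sum]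
  exact sum_congr fun x _ => by ring

/-- Corollary 1.7. With constant branching ratio `ρ ∈ (0,∞)`, the lift of a
bounded `λ`-harmonic function of the base chain is `λρ`-harmonic for the branching kernel. -/
theorem lift_harmonic [Countable X]
    (Pibr : X → Measure (X →₀ ℕ)) (hPibr : ∀ x, IsProbabilityMeasure (Pibr x))
    (K : Kernel (X →₀ ℕ) (X →₀ ℕ)) [IsMarkovKernel K]
    (hK0 : K 0 = Measure.dirac 0)
    (hKs : ∀ x : X, K (Finsupp.single x 1) = Pibr x)
    (hKadd : ∀ m m' : X →₀ ℕ, K (m + m') = popConv (K m) (K m'))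
    (ρ : ℝ) (hρ : 0 < ρ)
    (hBR : ∀ x : X, ∫⁻ m, (popSize m : ℝ≥0∞) ∂(Pibr x) = ENNReal.ofReal ρ)
    (f : X → ℝ) (C : ℝ) (hf : ∀ x, |f x| ≤ C)
    (lam : ℝ)
    (hharm : ∀ x : X,
      ∑' y : X, ((∫⁻ m, (m y : ℝ≥0∞) ∂(Pibr x)).toReal / ρ) * f y = lam * f x)
    (m : X →₀ ℕ) :
    ∫ m', (m'.sum fun x k => (k : ℝ) * f x) ∂(K m)
      = lam * ρ * (m.sum fun x k => (k : ℝ) * f x) :=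
  lift_harmonic_general Pibr K hK0 hKs hKadd ρ hρ hBR f C hf lam hharm m

end BMC
end

section
/- Lemma 2.5(iii): Let θ be a probability measure on ℕ with finite first moment. For every C > 0, the integral ∫₀^C R_θ(s)/s² ds is finite if and only if θ satisfies the L log L moment condition Σ_{k∈ℕ} θ(k)·k·log k < ∞. -/
/-!
By Tonelli, `∫₀^C R_θ(s)/s² ds = ∫ I_k dθ(k)` with `I_k = ∫₀^C ψ(sk)/s² ds`. The bounds
`ψ(t) ≤ min(t, t²)` and `ψ(t) ≥ t/2` for `t ≥ 2` squeeze `I_k` between `(k/2) log(Ck/2)` and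
`k (1 + log⁺(Ck))`, both `k log k + O(k)`, and the `O(k)` is absorbed by the first moment.
-/

open MeasureTheory Filter Topology
open scoped ENNReal NNReal

namespace BMC

/-- the remainder function `R_θ(s) = Σ_k θ(k)·ψ(s·k)`, where `ψ(t) = e^{−t} − 1 + t`,
of a probability measure `θ` on `ℕ` -/
noncomputable def remFn (θ : Measure ℕ) (s : ℝ) : ℝ :=
  ∑' k : ℕ, (θ {k}).toReal * (Real.exp (-(s * k)) - 1 + s * k)

open Real

lemma lintegral_ne_top_of_le_add_const_mul {α : Type*} [MeasurableSpace α] {μ : Measure α}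
    {f g h : α → ℝ≥0∞} {c : ℝ≥0∞} (hfgh : ∀ x, f x ≤ g x + c * h x) (hmeas : AEMeasurable h μ)
    (hg : ∫⁻ x, g x ∂μ ≠ ⊤) (hc : c ≠ ⊤) (hh : ∫⁻ x, h x ∂μ ≠ ⊤) : ∫⁻ x, f x ∂μ ≠ ⊤ := by
  refine ne_top_of_le_ne_top ?_ (lintegral_mono hfgh)
  rw [lintegral_add_right' _ (hmeas.const_mul c), lintegral_const_mul' _ _ hc]
  exact ENNReal.add_ne_top.2 ⟨hg, ENNReal.mul_ne_top hc hh⟩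

lemma setLIntegral_Ioc_ofReal_div {a b : ℝ} (c : ℝ) (ha : 0 < a) (hab : a ≤ b) (hc : 0 ≤ c) :
    ∫⁻ s in Set.Ioc a b, ENNReal.ofReal (c / s) = ENNReal.ofReal (c * log (b / a)) := by
  have hint : IntegrableOn (fun s : ℝ => c / s) (Set.Ioc a b) :=
    (ContinuousOn.integrableOn_Icc (continuousOn_const.div continuousOn_id
      fun x hx => (ha.trans_le hx.1).ne')).mono_set Set.Ioc_subset_Icc_self
  rw [← ofReal_integral_eq_lintegral_ofReal hint, ← intervalIntegral.integral_of_le hab]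
  · simp_rw [div_eq_mul_inv c]
    rw [intervalIntegral.integral_const_mul, integral_inv_of_pos ha (ha.trans_le hab)]
  · filter_upwards [ae_restrict_mem measurableSet_Ioc] with s hs
    exact div_nonneg hc (ha.trans hs.1).le

noncomputable def psi (t : ℝ) : ℝ := exp (-t) - 1 + t

@[fun_prop]
lemma continuous_psi : Continuous psi := by
  unfold psi; fun_prop

lemma psi_nonneg (t : ℝ) : 0 ≤ psi t := by
  unfold psi; nlinarith [add_one_le_exp (-t)]

lemma psi_le_self {t : ℝ} (ht : 0 ≤ t) : psi t ≤ t := by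
  unfold psi; nlinarith [exp_le_one_iff.mpr (neg_nonpos.mpr ht)]

lemma psi_le_sq {t : ℝ} (ht : 0 ≤ t) : psi t ≤ t ^ 2 := by
  rcases le_or_gt t 1 with h1 | h1
  · have := abs_exp_sub_one_sub_id_le (x := -t) (by rwa [abs_neg, abs_of_nonneg ht])
    unfold psi
    nlinarith [(abs_le.mp this).2]
  · nlinarith [psi_le_self ht]

lemma half_le_psi {t : ℝ} (ht : 2 ≤ t) : t / 2 ≤ psi t := by
  unfold psi; nlinarith [exp_nonneg (-t)]

noncomputable def psiIntegral (C : ℝ) (k : ℕ) : ℝ≥0∞ :=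
  ∫⁻ s in Set.Ioc 0 C, ENNReal.ofReal (psi (s * k) / s ^ 2)

section Remainder

variable {θ : Measure ℕ}

lemma integrable_psi_mul (hmom : ∫⁻ k : ℕ, (k : ℝ≥0∞) ∂θ ≠ ⊤) {s : ℝ} (hs : 0 ≤ s) :
    Integrable (fun k : ℕ => psi (s * k)) θ := by
  have hk : Integrable (fun k : ℕ => (k : ℝ)) θ := by
    simpa using integrable_toReal_of_lintegral_ne_top (by fun_prop) hmom
  refine (hk.const_mul s).mono' (by fun_prop) (ae_of_all _ fun k => ?_)
  rw [Real.norm_of_nonneg (psi_nonneg _)]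
  exact psi_le_self (by positivity)

lemma remFn_eq_integral (hmom : ∫⁻ k : ℕ, (k : ℝ≥0∞) ∂θ ≠ ⊤) {s : ℝ} (hs : 0 ≤ s) :
    remFn θ s = ∫ k, psi (s * k) ∂θ := by
  rw [integral_countable (integrable_psi_mul hmom hs)]
  rfl

lemma ofReal_remFn_div_sq (hmom : ∫⁻ k : ℕ, (k : ℝ≥0∞) ∂θ ≠ ⊤) {s : ℝ} (hs : 0 ≤ s) :
    ENNReal.ofReal (remFn θ s / s ^ 2) = ∫⁻ k, ENNReal.ofReal (psi (s * k) / s ^ 2) ∂θ := by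
  rw [remFn_eq_integral hmom hs, ← integral_div]
  exact ofReal_integral_eq_lintegral_ofReal ((integrable_psi_mul hmom hs).div_const _)
    (ae_of_all _ fun k => div_nonneg (psi_nonneg _) (sq_nonneg s))

lemma setLIntegral_remFn_div_sq (hmom : ∫⁻ k : ℕ, (k : ℝ≥0∞) ∂θ ≠ ⊤) (C : ℝ) :
    ∫⁻ s in Set.Ioc 0 C, ENNReal.ofReal (remFn θ s / s ^ 2) = ∫⁻ k, psiIntegral C k ∂θ := by
  rw [setLIntegral_congr_fun measurableSet_Ioc fun s hs => ofReal_remFn_div_sq hmom hs.1.le]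
  exact lintegral_lintegral_swap (by fun_prop)

end Remainder

lemma psi_mul_div_sq_le_sq {s x : ℝ} (hs : 0 < s) (hx : 0 ≤ x) : psi (s * x) / s ^ 2 ≤ x ^ 2 := by
  rw [div_le_iff₀ (by positivity)]
  linarith [psi_le_sq (mul_nonneg hs.le hx)]

lemma psi_mul_div_sq_le_div {s x : ℝ} (hs : 0 < s) (hx : 0 ≤ x) : psi (s * x) / s ^ 2 ≤ x / s := by
  rw [div_le_div_iff₀ (by positivity) hs]
  nlinarith [psi_le_self (mul_nonneg hs.le hx)]

lemma half_div_le_psi_mul_div_sq {s x : ℝ} (hs : 0 < s) (hsx : 2 ≤ s * x) :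
    x / 2 / s ≤ psi (s * x) / s ^ 2 := by
  rw [div_le_div_iff₀ hs (by positivity)]
  nlinarith [half_le_psi hsx]

lemma psiIntegral_le (C : ℝ) (k : ℕ) :
    psiIntegral C k ≤ ENNReal.ofReal (k * (1 + log⁺ (C * k))) := by
  rcases k.eq_zero_or_pos with rfl | hk
  · simp [psiIntegral, psi]
  have hk0 : (0 : ℝ) < k := by exact_mod_cast hk
  set C' := max C (k : ℝ)⁻¹
  have hkC' : (k : ℝ)⁻¹ ≤ C' := le_max_right _ _
  have hlog : log (C' / (k : ℝ)⁻¹) ≤ log⁺ (C * k) := by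
    rw [div_inv_eq_mul, max_mul_of_nonneg _ _ hk0.le, inv_mul_cancel₀ hk0.ne']
    rcases le_total (C * k) 1 with h | h
    · simp [max_eq_right h, posLog_nonneg]
    · rw [max_eq_left h]; exact le_max_right _ _
  -- below `s = 1/k` use `ψ(t) ≤ t²`, above it `ψ(t) ≤ t`
  calc psiIntegral C k ≤ ∫⁻ s in Set.Ioc 0 C', ENNReal.ofReal (psi (s * k) / s ^ 2) :=
        lintegral_mono_set (Set.Ioc_subset_Ioc_right (le_max_left _ _))
    _ = (∫⁻ s in Set.Ioc 0 (k : ℝ)⁻¹, ENNReal.ofReal (psi (s * k) / s ^ 2)) +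
          ∫⁻ s in Set.Ioc (k : ℝ)⁻¹ C', ENNReal.ofReal (psi (s * k) / s ^ 2) := by
        rw [← Set.Ioc_union_Ioc_eq_Ioc (by positivity) hkC',
          lintegral_union measurableSet_Ioc (Set.Ioc_disjoint_Ioc_of_le le_rfl)]
    _ ≤ (∫⁻ _ in Set.Ioc 0 (k : ℝ)⁻¹, ENNReal.ofReal ((k : ℝ) ^ 2)) +
          ∫⁻ s in Set.Ioc (k : ℝ)⁻¹ C', ENNReal.ofReal (k / s) := by
        refine add_le_add (setLIntegral_mono' measurableSet_Ioc fun s hs => ?_)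
          (setLIntegral_mono' measurableSet_Ioc fun s hs => ?_)
        · exact ENNReal.ofReal_le_ofReal (psi_mul_div_sq_le_sq hs.1 hk0.le)
        · exact ENNReal.ofReal_le_ofReal
            (psi_mul_div_sq_le_div ((inv_pos.2 hk0).trans hs.1) hk0.le)
    _ = ENNReal.ofReal k + ENNReal.ofReal (k * log (C' / (k : ℝ)⁻¹)) := by
        rw [setLIntegral_Ioc_ofReal_div _ (inv_pos.2 hk0) hkC' hk0.le, setLIntegral_const,
          Real.volume_Ioc, sub_zero, ← ENNReal.ofReal_mul (by positivity), sq,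
          mul_assoc, mul_inv_cancel₀ hk0.ne', mul_one]
    _ ≤ ENNReal.ofReal (k * (1 + log⁺ (C * k))) := by
        have hlog0 : 0 ≤ log (C' / (k : ℝ)⁻¹) :=
          log_nonneg ((one_le_div (inv_pos.2 hk0)).2 hkC')
        rw [← ENNReal.ofReal_add hk0.le (by positivity)]
        gcongr
        nlinarith

lemma ofReal_half_mul_log_le_psiIntegral {C : ℝ} (hC : 0 < C) (k : ℕ) :
    ENNReal.ofReal (k / 2 * log (C * k / 2)) ≤ psiIntegral C k := by
  by_cases h : 2 ≤ C * k
  · have hk0 : (0 : ℝ) < k := pos_of_mul_pos_right (by linarith) hC.le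
    have ha : 0 < 2 / (k : ℝ) := by positivity
    have haC : 2 / (k : ℝ) ≤ C := by rwa [div_le_iff₀ hk0]
    calc ENNReal.ofReal (k / 2 * log (C * k / 2))
          = ENNReal.ofReal (k / 2 * log (C / (2 / k))) := by rw [div_div_eq_mul_div]
      _ = ∫⁻ s in Set.Ioc (2 / (k : ℝ)) C, ENNReal.ofReal (k / 2 / s) :=
          (setLIntegral_Ioc_ofReal_div _ ha haC (by positivity)).symm
      _ ≤ ∫⁻ s in Set.Ioc (2 / (k : ℝ)) C, ENNReal.ofReal (psi (s * k) / s ^ 2) :=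
          setLIntegral_mono' measurableSet_Ioc fun s hs => ENNReal.ofReal_le_ofReal <|
            half_div_le_psi_mul_div_sq (ha.trans hs.1) (by
              have := hs.1; rw [div_lt_iff₀ hk0] at this; linarith)
      _ ≤ psiIntegral C k := lintegral_mono_set (Set.Ioc_subset_Ioc_left ha.le)
  · rw [ENNReal.ofReal_of_nonpos]
    · exact zero_le
    · exact mul_nonpos_of_nonneg_of_nonpos (by positivity)
        (log_nonpos (by positivity) (by linarith))

lemma psiIntegral_le_ofReal_mul_log_add (C : ℝ) (k : ℕ) :
    psiIntegral C k ≤ ENNReal.ofReal (k * log k) + ENNReal.ofReal (1 + log⁺ C) * k := by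
  refine (psiIntegral_le C k).trans ?_
  rw [← ENNReal.ofReal_natCast, ← ENNReal.ofReal_mul (add_nonneg zero_le_one posLog_nonneg)]
  refine (ENNReal.ofReal_le_ofReal ?_).trans ENNReal.ofReal_add_le
  rw [mul_comm C]
  nlinarith [posLog_nat_mul (n := k) (x := C), k.cast_nonneg (α := ℝ)]

lemma ofReal_mul_log_le_two_mul_psiIntegral_add {C : ℝ} (hC : 0 < C) (k : ℕ) :
    ENNReal.ofReal (k * log k) ≤ 2 * psiIntegral C k + ENNReal.ofReal (log⁺ (2 / C)) * k := by
  have hsplit : k * log k ≤ 2 * (k / 2 * log (C * k / 2)) + log⁺ (2 / C) * k := by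
    rcases k.eq_zero_or_pos with rfl | hk
    · simp
    have hk0 : (0 : ℝ) < k := by exact_mod_cast hk
    have hlog : log (C * k / 2) = log k - log (2 / C) := by
      rw [log_div (by positivity) two_ne_zero, log_mul hC.ne' hk0.ne',
        log_div two_ne_zero hC.ne']
      ring
    rw [hlog]
    nlinarith [le_max_right 0 (log (2 / C)), posLog_apply (x := 2 / C)]
  calc ENNReal.ofReal (k * log k)
      ≤ ENNReal.ofReal (2 * (k / 2 * log (C * k / 2))) + ENNReal.ofReal (log⁺ (2 / C) * k) :=
        (ENNReal.ofReal_le_ofReal hsplit).trans ENNReal.ofReal_add_le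
    _ = 2 * ENNReal.ofReal (k / 2 * log (C * k / 2)) + ENNReal.ofReal (log⁺ (2 / C)) * k := by
        rw [ENNReal.ofReal_mul zero_le_two, ENNReal.ofReal_mul posLog_nonneg,
          ENNReal.ofReal_ofNat, ENNReal.ofReal_natCast]
    _ ≤ 2 * psiIntegral C k + ENNReal.ofReal (log⁺ (2 / C)) * k := by
        gcongr
        exact ofReal_half_mul_log_le_psiIntegral hC k

theorem remFn_integral_finite_iff_LlogL_general (θ : Measure ℕ)
    (hmom : ∫⁻ k : ℕ, (k : ℝ≥0∞) ∂θ ≠ ⊤) (C : ℝ) (hC : 0 < C) :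
    (∫⁻ s in Set.Ioc (0 : ℝ) C, ENNReal.ofReal (remFn θ s / s ^ 2)) ≠ ⊤ ↔
      ∫⁻ k : ℕ, ENNReal.ofReal ((k : ℝ) * Real.log k) ∂θ ≠ ⊤ := by
  have hmeas : AEMeasurable (fun k : ℕ => (k : ℝ≥0∞)) θ := by fun_prop
  rw [setLIntegral_remFn_div_sq hmom C]
  constructor
  · intro h
    refine lintegral_ne_top_of_le_add_const_mul (ofReal_mul_log_le_two_mul_psiIntegral_add hC)
      hmeas ?_ ENNReal.ofReal_ne_top hmom
    rw [lintegral_const_mul' _ _ ENNReal.ofNat_ne_top]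
    exact ENNReal.mul_ne_top ENNReal.ofNat_ne_top h
  · exact fun h => lintegral_ne_top_of_le_add_const_mul (psiIntegral_le_ofReal_mul_log_add C)
      hmeas h ENNReal.ofReal_ne_top hmom

/-- Lemma 2.5(iii). For a probability measure `θ` on `ℕ` with finite first
moment and any `C > 0`, the integral `∫₀^C R_θ(s)/s² ds` is finite if and only if `θ`
satisfies the `L log L` moment condition `Σ_k θ(k)·k·log k < ∞`. -/
theorem remFn_integral_finite_iff_LlogL (θ : Measure ℕ) (hθ : IsProbabilityMeasure θ)
    (hmom : ∫⁻ k : ℕ, (k : ℝ≥0∞) ∂θ ≠ ⊤) (C : ℝ) (hC : 0 < C) :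
    (∫⁻ s in Set.Ioc (0 : ℝ) C, ENNReal.ofReal (remFn θ s / s ^ 2)) ≠ ⊤ ↔
      ∫⁻ k : ℕ, ENNReal.ofReal ((k : ℝ) * Real.log k) ∂θ ≠ ⊤ :=
  remFn_integral_finite_iff_LlogL_general θ hmom C hC

end BMC
end

section
/- Proposition 4.6 (lifts of space-time harmonic functions): Assume 0 < π̄_x < ∞ for all x ∈ X. Let (f_n)_{n≥0} be a sequence of nonnegative functions f_n : X → [0,∞]. Then the lifts f̃_n(m) = ⟨m, f_n⟩ form a space-time harmonic function for the branching kernel, i.e. ∫_M ⟨m', f_{n+1}⟩ dK(m)(m') = ⟨m, f_n⟩ for all m ∈ M and n ≥ 0, if and only if f_n(x) = π̄_x · Σ_{y∈X} p(x,y)·f_{n+1}(y) for all x ∈ X and n ≥ 0. -/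
open MeasureTheory ProbabilityTheory Filter Topology
open scoped ENNReal NNReal Classical

namespace BMC

variable {X : Type*}

/-!
Both sides of the harmonic identity are additive in the population `m`: the lift `⟨m, f⟩` is,
and so is the mean `m ↦ ∫ ⟨·, f⟩ dK(m)`, because `K(m + m') = K(m) ∗ K(m')` turns the integral of
an additive function into a sum of integrals. Hence the identity holds for all `m` iff it holds
for single particles `m = δ_x`, where `∫ ⟨·, f_{n+1}⟩ dΠ_x = Σ_y (∫ m(y) dΠ_x) f_{n+1}(y)`, which
is `π̄_x Σ_y p(x,y) f_{n+1}(y)` once `0 < π̄_x < ∞` lets the division be cancelled.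
-/

instance : MeasurableSingletonClass (X →₀ ℕ) := ⟨fun _ => trivial⟩

noncomputable def popLift (f : X → ℝ≥0∞) : (X →₀ ℕ) →+ ℝ≥0∞ where
  toFun m := ∑' x, (m x : ℝ≥0∞) * f x
  map_zero' := by simp
  map_add' a b := by
    rw [← ENNReal.tsum_add]
    exact tsum_congr fun x => by simp only [Finsupp.add_apply, Nat.cast_add, add_mul]

theorem popLift_apply (f : X → ℝ≥0∞) (m : X →₀ ℕ) :
    popLift f m = ∑' x, (m x : ℝ≥0∞) * f x := rfl

@[simp]
theorem popLift_single_one (f : X → ℝ≥0∞) (x : X) : popLift f (Finsupp.single x 1) = f x := by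
  rw [popLift_apply, tsum_eq_single x fun y hy => by simp [Ne.symm hy]]
  simp

theorem popLift_injective : Function.Injective (popLift (X := X)) := fun f g h =>
  funext fun x => by rw [← popLift_single_one f x, ← popLift_single_one g x, h]

theorem lintegral_popConv_addHom [Countable X] (μ ν : Measure (X →₀ ℕ))
    [IsProbabilityMeasure μ] [IsProbabilityMeasure ν] (g : (X →₀ ℕ) →+ ℝ≥0∞) :
    ∫⁻ m, g m ∂(popConv μ ν) = ∫⁻ m, g m ∂μ + ∫⁻ m, g m ∂ν := by
  rw [popConv, lintegral_map (measurable_of_countable g) (measurable_of_countable _),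
    lintegral_prod _ (measurable_of_countable _).aemeasurable]
  simp only [map_add]
  simp [lintegral_add_left measurable_const, lintegral_add_left (measurable_of_countable g)]

theorem lintegral_addHom_eq_popLift [Countable X] (K : Kernel (X →₀ ℕ) (X →₀ ℕ))
    [IsMarkovKernel K] (hK0 : K 0 = Measure.dirac 0)
    (hKadd : ∀ m m' : X →₀ ℕ, K (m + m') = popConv (K m) (K m'))
    (g : (X →₀ ℕ) →+ ℝ≥0∞) (m : X →₀ ℕ) :
    ∫⁻ m', g m' ∂(K m) = popLift (fun x => ∫⁻ m', g m' ∂(K (Finsupp.single x 1))) m := by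
  let mean : (X →₀ ℕ) →+ ℝ≥0∞ :=
    { toFun m := ∫⁻ m', g m' ∂(K m)
      map_zero' := by simp [hK0]
      map_add' a b := by simp only [hKadd, lintegral_popConv_addHom] }
  suffices mean = popLift (fun x => mean (Finsupp.single x 1)) from DFunLike.congr_fun this m
  ext x
  simp

theorem lintegral_popLift [Countable X] (μ : Measure (X →₀ ℕ)) (f : X → ℝ≥0∞) :
    ∫⁻ m, popLift f m ∂μ = ∑' y, (∫⁻ m, (m y : ℝ≥0∞) ∂μ) * f y := by
  simp only [popLift_apply]
  rw [lintegral_tsum fun y => (measurable_of_countable _).aemeasurable]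
  exact tsum_congr fun y => lintegral_mul_const _ (measurable_of_countable _)

theorem lift_spaceTime_harmonic_iff_general [Countable X]
    (Pibr : X → Measure (X →₀ ℕ))
    (K : Kernel (X →₀ ℕ) (X →₀ ℕ)) [IsMarkovKernel K]
    (hK0 : K 0 = Measure.dirac 0)
    (hKs : ∀ x : X, K (Finsupp.single x 1) = Pibr x)
    (hKadd : ∀ m m' : X →₀ ℕ, K (m + m') = popConv (K m) (K m'))
    (hbr : ∀ x : X, 0 < ∫⁻ m, (popSize m : ℝ≥0∞) ∂(Pibr x) ∧
      ∫⁻ m, (popSize m : ℝ≥0∞) ∂(Pibr x) ≠ ⊤)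
    (f : ℕ → X → ℝ≥0∞) :
    (∀ (n : ℕ) (m : X →₀ ℕ),
        ∫⁻ m', (∑' x : X, (m' x : ℝ≥0∞) * f (n + 1) x) ∂(K m)
          = ∑' x : X, (m x : ℝ≥0∞) * f n x)
    ↔ (∀ (n : ℕ) (x : X),
        f n x = (∫⁻ m, (popSize m : ℝ≥0∞) ∂(Pibr x)) *
          ∑' y : X, ((∫⁻ m, (m y : ℝ≥0∞) ∂(Pibr x))
            / ∫⁻ m, (popSize m : ℝ≥0∞) ∂(Pibr x)) * f (n + 1) y) := by
  have hmean : ∀ n x, ∫⁻ m, popLift (f (n + 1)) m ∂(Pibr x)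
      = (∫⁻ m, (popSize m : ℝ≥0∞) ∂(Pibr x)) *
        ∑' y, ((∫⁻ m, (m y : ℝ≥0∞) ∂(Pibr x)) / ∫⁻ m, (popSize m : ℝ≥0∞) ∂(Pibr x)) *
          f (n + 1) y := fun n x => by
    rw [lintegral_popLift, ← ENNReal.tsum_mul_left]
    exact tsum_congr fun y => by rw [← mul_assoc, ENNReal.mul_div_cancel (hbr x).1.ne' (hbr x).2]
  simp only [← popLift_apply, lintegral_addHom_eq_popLift K hK0 hKadd, hKs, hmean]
  simp only [← DFunLike.ext_iff, popLift_injective.eq_iff, funext_iff, eq_comm]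

/-- Proposition 4.6. Assume `0 < π̄_x < ∞` for all `x`. The lifts of a
sequence of nonnegative functions `f_n : X → [0,∞]` form a space-time harmonic function for
the branching kernel iff `f_n(x) = π̄_x · Σ_y p(x,y)·f_{n+1}(y)` for all `x, n`. -/
theorem lift_spaceTime_harmonic_iff [Countable X]
    (Pibr : X → Measure (X →₀ ℕ)) (hPibr : ∀ x, IsProbabilityMeasure (Pibr x))
    (K : Kernel (X →₀ ℕ) (X →₀ ℕ)) [IsMarkovKernel K]
    (hK0 : K 0 = Measure.dirac 0)
    (hKs : ∀ x : X, K (Finsupp.single x 1) = Pibr x)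
    (hKadd : ∀ m m' : X →₀ ℕ, K (m + m') = popConv (K m) (K m'))
    (hbr : ∀ x : X, 0 < ∫⁻ m, (popSize m : ℝ≥0∞) ∂(Pibr x) ∧
      ∫⁻ m, (popSize m : ℝ≥0∞) ∂(Pibr x) ≠ ⊤)
    (f : ℕ → X → ℝ≥0∞) :
    (∀ (n : ℕ) (m : X →₀ ℕ),
        ∫⁻ m', (∑' x : X, (m' x : ℝ≥0∞) * f (n + 1) x) ∂(K m)
          = ∑' x : X, (m x : ℝ≥0∞) * f n x)
    ↔ (∀ (n : ℕ) (x : X),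
        f n x = (∫⁻ m, (popSize m : ℝ≥0∞) ∂(Pibr x)) *
          ∑' y : X, ((∫⁻ m, (m y : ℝ≥0∞) ∂(Pibr x))
            / ∫⁻ m, (popSize m : ℝ≥0∞) ∂(Pibr x)) * f (n + 1) y) :=
  lift_spaceTime_harmonic_iff_general Pibr K hK0 hKs hKadd hbr f

end BMC
end

section
/- Proposition 3.2: Let X be a countable set with transition probabilities p(x,·) ∈ Prob(X), and let (K, κ) be a compact metrizable P-stationary space: K is a compact metrizable topological space and κ : X → Prob(K) satisfies κ_x = Σ_{y∈X} p(x,y)·κ_y for every x ∈ X. Then for every x ∈ X, for ℙ_x-almost every trajectory (X_n) of the Markov chain there exists a Borel probability measure κ̄ on K (depending measurably on the trajectory) such that κ_{X_n} → κ̄ in the topology of weak convergence of probability measures on K; moreover, for every continuous φ : K → ℝ and every x ∈ X, E_{ℙ_x}[∫_K φ dκ̄] = ∫_K φ dκ_x. -/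
open MeasureTheory ProbabilityTheory Filter Topology TopologicalSpace
open Function
open Preorder (restrictLe measurable_restrictLe)
open scoped ENNReal NNReal Classical CompactlySupported

/-!
For continuous `φ`, the function `z ↦ ∫ φ dκ_z` is bounded and `P`-harmonic by stationarity, so
`n ↦ ∫ φ dκ_{X_n}` is a bounded martingale for the natural filtration of the chain and converges
almost surely. Doing this for a dense sequence of `φ` and using that `φ ↦ ∫ φ dκ_z` is
1-Lipschitz, almost surely all these integrals converge; the limit functional is positive and
normalized, hence integration against a probability measure `κ̄` by Riesz–Markov–Kakutani. The
barycentre identity is dominated convergence applied to the constant expectations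
`E_x[∫ φ dκ_{X_n}] = ∫ φ dκ_x` of the martingale.
-/

namespace BMC

theorem cauchySeq_of_denseRange {E α : Type*} [PseudoMetricSpace E] [PseudoMetricSpace α]
    {F : ℕ → E → α} (hF : ∀ n, LipschitzWith 1 (F n)) {u : ℕ → E} (hu : DenseRange u)
    (h : ∀ i, CauchySeq fun n => F n (u i)) (x : E) : CauchySeq fun n => F n x := by
  refine Metric.cauchySeq_iff.2 fun ε hε => ?_
  obtain ⟨i, hi⟩ := Metric.denseRange_iff.1 hu x (ε / 3) (by positivity)
  obtain ⟨N, hN⟩ := Metric.cauchySeq_iff.1 (h i) (ε / 3) (by positivity)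
  have hclose : ∀ n, dist (F n x) (F n (u i)) < ε / 3 := fun n =>
    ((hF n).dist_le_mul x (u i)).trans_lt (by simpa using hi)
  refine ⟨N, fun m hm n hn => ?_⟩
  calc dist (F m x) (F n x)
      ≤ dist (F m x) (F m (u i)) + dist (F m (u i)) (F n (u i)) + dist (F n (u i)) (F n x) :=
        dist_triangle4 _ _ _ _
    _ < ε / 3 + ε / 3 + ε / 3 := by
        gcongr
        · exact hclose m
        · exact hN m hm n hn
        · rw [dist_comm]; exact hclose n
    _ = ε := by ring

section CompactSpace

variable {K : Type*} [TopologicalSpace K] [CompactSpace K] [MeasurableSpace K]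

theorem integrable_continuousMap [OpensMeasurableSpace K] (φ : C(K, ℝ)) (μ : Measure K)
    [IsFiniteMeasure μ] : Integrable φ μ :=
  φ.continuous.integrable_of_hasCompactSupport (.of_compactSpace _)

theorem abs_integral_le_norm [OpensMeasurableSpace K] (φ : C(K, ℝ)) (μ : Measure K)
    [IsProbabilityMeasure μ] : |∫ ξ, φ ξ ∂μ| ≤ ‖φ‖ := by
  simpa using norm_integral_le_of_norm_le_const (μ := μ) (.of_forall φ.norm_coe_le_norm)

theorem lipschitzWith_integral [OpensMeasurableSpace K] (μ : Measure K) [IsProbabilityMeasure μ] :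
    LipschitzWith 1 fun φ : C(K, ℝ) => ∫ ξ, φ ξ ∂μ := by
  refine LipschitzWith.of_dist_le_mul fun φ ψ => ?_
  rw [Real.dist_eq, ← integral_sub (integrable_continuousMap φ μ) (integrable_continuousMap ψ μ),
    NNReal.coe_one, one_mul, dist_eq_norm]
  exact abs_integral_le_norm (φ - ψ) μ

/-- The limit functional is positive and normalized, so Riesz–Markov–Kakutani represents it by a
probability measure. -/
theorem exists_isProbabilityMeasure_tendsto_integral [T2Space K] [BorelSpace K]
    (μ : ℕ → Measure K) [∀ n, IsProbabilityMeasure (μ n)]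
    (h : ∀ φ : C(K, ℝ), ∃ c, Tendsto (fun n => ∫ ξ, φ ξ ∂(μ n)) atTop (𝓝 c)) :
    ∃ ν : Measure K, IsProbabilityMeasure ν ∧
      ∀ φ : C(K, ℝ), Tendsto (fun n => ∫ ξ, φ ξ ∂(μ n)) atTop (𝓝 (∫ ξ, φ ξ ∂ν)) := by
  have hlim (f : C_c(K, ℝ)) :
      Tendsto (fun n => ∫ ξ, f ξ ∂(μ n)) atTop (𝓝 (limUnder atTop fun n => ∫ ξ, f ξ ∂(μ n))) :=
    tendsto_nhds_limUnder (h f.toContinuousMap)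
  let Λ : C_c(K, ℝ) →ₚ[ℝ] ℝ :=
    { toFun f := limUnder atTop fun n => ∫ ξ, f ξ ∂(μ n)
      map_add' f g := tendsto_nhds_unique (hlim (f + g)) <| by
        simpa only [CompactlySupportedContinuousMap.coe_add, Pi.add_apply,
          integral_add f.integrable g.integrable] using (hlim f).add (hlim g)
      map_smul' c f := tendsto_nhds_unique (hlim (c • f)) <| by
        simpa only [CompactlySupportedContinuousMap.coe_smul, Pi.smul_apply, smul_eq_mul,
          integral_const_mul, RingHom.id_apply] using (hlim f).const_mul c
      monotone' f g hfg := le_of_tendsto_of_tendsto' (hlim f) (hlim g) fun n =>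
        integral_mono f.integrable g.integrable hfg }
  have hΛ (φ : C(K, ℝ)) : ∫ ξ, φ ξ ∂(RealRMK.rieszMeasure Λ) = Λ (.continuousMapEquiv φ) :=
    RealRMK.integral_rieszMeasure Λ (.continuousMapEquiv φ)
  refine ⟨RealRMK.rieszMeasure Λ, ⟨?_⟩, fun φ => hΛ φ ▸ hlim _⟩
  have hone : Λ (.continuousMapEquiv 1) = 1 :=
    tendsto_nhds_unique (hlim _) (by simp)
  have h1 := hΛ 1
  rw [hone] at h1
  simp only [ContinuousMap.one_apply, integral_const, smul_eq_mul, mul_one, measureReal_def] at h1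
  exact (ENNReal.toReal_eq_one_iff _).1 h1

theorem exists_isProbabilityMeasure_tendsto_integral_of_denseRange [T2Space K] [BorelSpace K]
    (μ : ℕ → Measure K) [∀ n, IsProbabilityMeasure (μ n)] {u : ℕ → C(K, ℝ)} (hu : DenseRange u)
    (h : ∀ i, ∃ c, Tendsto (fun n => ∫ ξ, u i ξ ∂(μ n)) atTop (𝓝 c)) :
    ∃ ν : Measure K, IsProbabilityMeasure ν ∧
      ∀ φ : C(K, ℝ), Tendsto (fun n => ∫ ξ, φ ξ ∂(μ n)) atTop (𝓝 (∫ ξ, φ ξ ∂ν)) :=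
  exists_isProbabilityMeasure_tendsto_integral μ fun φ => cauchySeq_tendsto_of_complete <|
    cauchySeq_of_denseRange (fun n => lipschitzWith_integral (μ n)) hu
      (fun i => (h i).choose_spec.cauchySeq) φ

theorem exists_measurable_tendsto_integral [T2Space K] [BorelSpace K] {Ω : Type*}
    [MeasurableSpace Ω] (μ : ℕ → Ω → Measure K) [∀ n ω, IsProbabilityMeasure (μ n ω)]
    {u : ℕ → C(K, ℝ)} (hu : DenseRange u)
    (hμ : ∀ (φ : C(K, ℝ)) n, Measurable fun ω => ∫ ξ, φ ξ ∂(μ n ω)) :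
    ∃ ν : Ω → Measure K, (∀ φ : C(K, ℝ), Measurable fun ω => ∫ ξ, φ ξ ∂(ν ω)) ∧
      ∀ ω, (∀ i, ∃ c, Tendsto (fun n => ∫ ξ, u i ξ ∂(μ n ω)) atTop (𝓝 c)) →
        IsProbabilityMeasure (ν ω) ∧
          ∀ φ : C(K, ℝ), Tendsto (fun n => ∫ ξ, φ ξ ∂(μ n ω)) atTop (𝓝 (∫ ξ, φ ξ ∂(ν ω))) := by
  set G : Set Ω := ⋂ i, {ω | ∃ c, Tendsto (fun n => ∫ ξ, u i ξ ∂(μ n ω)) atTop (𝓝 c)}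
  have hG (ω) (hω : ω ∈ G) := exists_isProbabilityMeasure_tendsto_integral_of_denseRange
    (fun n => μ n ω) hu (Set.mem_iInter.1 hω)
  choose! ν hν using hG
  have hGmeas : MeasurableSet G :=
    MeasurableSet.iInter fun i => measurableSet_exists_tendsto (hμ (u i))
  -- With the zero measure off `G`, `ω ↦ ∫ φ d(ν ω)` is a pointwise limit of measurable indicators.
  refine ⟨fun ω => if ω ∈ G then ν ω else 0, fun φ => ?_, fun ω hω => ?_⟩
  · refine measurable_of_tendsto_metrizable (fun n => (hμ φ n).indicator hGmeas)
      (tendsto_pi_nhds.2 fun ω => ?_)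
    by_cases hω : ω ∈ G
    · simpa [hω] using (hν ω hω).2 φ
    · simp [hω]
  · have hωG : ω ∈ G := Set.mem_iInter.2 hω
    simpa [hωG] using hν ω hωG

end CompactSpace

theorem _root_.MeasureTheory.Martingale.exists_ae_tendsto_of_abs_le {Ω : Type*}
    {m0 : MeasurableSpace Ω} {μ : Measure Ω} [IsFiniteMeasure μ] {ℱ : Filtration ℕ m0}
    {f : ℕ → Ω → ℝ} (hf : Martingale f ℱ μ) {C : ℝ} (hC : ∀ n ω, |f n ω| ≤ C) :
    ∀ᵐ ω ∂μ, ∃ c, Tendsto (fun n => f n ω) atTop (𝓝 c) := by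
  refine hf.submartingale.exists_ae_tendsto_of_bdd
    (R := (μ Set.univ * ENNReal.ofReal C).toNNReal) fun n => ?_
  rw [ENNReal.coe_toNNReal (by finiteness)]
  simpa using eLpNorm_le_of_ae_bound (p := 1) (.of_forall fun ω => (hC n ω : ‖f n ω‖ ≤ C))

section MarkovChain

variable {X : Type*}

def pathCylinder (n : ℕ) (path : ℕ → X) : Set (ℕ → X) := {ω | ∀ i ≤ n, ω i = path i}

theorem preimage_restrictLe_singleton (n : ℕ) (path : ℕ → X) :
    restrictLe (π := fun _ => X) n ⁻¹' {restrictLe n path} = pathCylinder n path := by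
  ext ω
  simp [pathCylinder, funext_iff]

theorem pathCylinder_eq_iUnion (n : ℕ) (path : ℕ → X) :
    pathCylinder n path = ⋃ y, pathCylinder (n + 1) (update path (n + 1) y) := by
  ext ω
  simp only [pathCylinder, Set.mem_ofPred_eq, Set.mem_iUnion]
  refine ⟨fun h => ⟨ω (n + 1), fun i hi => ?_⟩, fun ⟨y, h⟩ i hi => ?_⟩
  · rcases hi.lt_or_eq with hi | rfl
    · rw [update_of_ne (by omega), h i (by omega)]
    · rw [update_self]
  · rw [h i (by omega), update_of_ne (by omega)]

theorem pairwise_disjoint_pathCylinder_update (n : ℕ) (path : ℕ → X) :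
    Pairwise (Disjoint on fun y => pathCylinder (n + 1) (update path (n + 1) y)) := by
  intro y y' hne
  refine Set.disjoint_left.2 fun ω h h' => hne ?_
  simpa using (h (n + 1) le_rfl).symm.trans (h' (n + 1) le_rfl)

variable [MeasurableSpace X]

def IsHarmonic (p : X → Measure X) (g : X → ℝ) : Prop :=
  ∀ z, g z = ∑' y, (p z {y}).toReal * g y

def IsMarkovChainLaw (p : X → Measure X) (x : X) (μ : Measure (ℕ → X)) : Prop :=
  ∀ (n : ℕ) (path : ℕ → X), μ {ω | ∀ i ≤ n, ω i = path i}
    = (if path 0 = x then 1 else 0) * ∏ i ∈ Finset.range n, p (path i) {path (i + 1)}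

variable {p : X → Measure X} {x : X}

theorem isHarmonic_integral_of_stationary {K : Type*} [MeasurableSpace K] {κ : X → Measure K}
    (hstat : ∀ (x : X) (s : Set K), MeasurableSet s → κ x s = ∑' y : X, p x {y} * κ y s)
    {f : K → ℝ} (hf : ∀ z, Integrable f (κ z)) : IsHarmonic p fun z => ∫ ξ, f ξ ∂(κ z) := by
  intro z
  have hsum : κ z = Measure.sum fun y => p z {y} • κ y := Measure.ext fun s hs => by
    rw [Measure.sum_apply _ hs]
    exact hstat z s hs
  show ∫ ξ, f ξ ∂(κ z) = ∑' y, (p z {y}).toReal * ∫ ξ, f ξ ∂(κ y)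
  rw [hsum, integral_sum_measure (hsum ▸ hf z)]
  simp only [integral_smul_measure, smul_eq_mul]

theorem IsMarkovChainLaw.measure_pathCylinder_update {μ : Measure (ℕ → X)}
    (hμ : IsMarkovChainLaw p x μ) (n : ℕ) (path : ℕ → X) (y : X) :
    μ (pathCylinder (n + 1) (update path (n + 1) y))
      = μ (pathCylinder n path) * p (path n) {y} := by
  have hupd : ∀ i ≤ n, update path (n + 1) y i = path i := fun i hi =>
    update_of_ne (by omega) _ _
  have hprod : ∏ i ∈ Finset.range n, p (update path (n + 1) y i) {update path (n + 1) y (i + 1)}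
      = ∏ i ∈ Finset.range n, p (path i) {path (i + 1)} :=
    Finset.prod_congr rfl fun i hi => by
      have := Finset.mem_range.1 hi
      rw [hupd i (by omega), hupd (i + 1) (by omega)]
  rw [pathCylinder, pathCylinder, hμ, hμ, Finset.prod_range_succ, hupd 0 (by omega),
    hupd n le_rfl, update_self, hprod, mul_assoc]

variable [MeasurableSingletonClass X]

theorem measurableSet_pathCylinder (n : ℕ) (path : ℕ → X) :
    MeasurableSet (pathCylinder n path) :=
  preimage_restrictLe_singleton n path ▸
    measurable_restrictLe n (measurableSet_singleton _)

theorem setIntegral_pathCylinder_comp_eval (μ : Measure (ℕ → X)) (g : X → ℝ) {m n : ℕ}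
    (hmn : m ≤ n) (path : ℕ → X) :
    ∫ ω in pathCylinder n path, g (ω m) ∂μ = μ.real (pathCylinder n path) * g (path m) := by
  rw [setIntegral_congr_fun (measurableSet_pathCylinder n path)
    (fun ω hω => by rw [hω m hmn]), setIntegral_const, smul_eq_mul]

theorem IsMarkovChainLaw.ae_eval_zero {μ : Measure (ℕ → X)} [IsProbabilityMeasure μ]
    (hμ : IsMarkovChainLaw p x μ) : ∀ᵐ ω ∂μ, ω 0 = x := by
  have h : μ (pathCylinder 0 fun _ => x) = μ Set.univ := by
    simpa [pathCylinder] using hμ 0 fun _ => x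
  filter_upwards [(ae_iff_measure_eq (measurableSet_pathCylinder 0 _).nullMeasurableSet).2 h]
    with ω hω using hω 0 le_rfl

variable [Countable X] {g : X → ℝ} {C : ℝ}

theorem integrable_comp_eval (μ : Measure (ℕ → X)) [IsFiniteMeasure μ]
    (hgC : ∀ z, |g z| ≤ C) (m : ℕ) : Integrable (fun ω => g (ω m)) μ :=
  .of_bound ((measurable_of_countable g).comp (measurable_pi_apply m)).aestronglyMeasurable C
    (.of_forall fun ω => hgC (ω m))

theorem setIntegral_eq_of_forall_pathCylinder (μ : Measure (ℕ → X)) {f h : (ℕ → X) → ℝ}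
    (hf : Integrable f μ) (hh : Integrable h μ) {n : ℕ}
    (hcyl : ∀ path, ∫ ω in pathCylinder n path, f ω ∂μ = ∫ ω in pathCylinder n path, h ω ∂μ)
    {s : Set (ℕ → X)} (hs : MeasurableSet[Filtration.piLE (X := fun _ => X) n] s) :
    ∫ ω in s, f ω ∂μ = ∫ ω in s, h ω ∂μ := by
  -- `X` being countable, `s` is a countable disjoint union of cylinders.
  obtain ⟨S, -, rfl⟩ := hs
  have hS : restrictLe n ⁻¹' S = ⋃ v : S, restrictLe (π := fun _ => X) n ⁻¹' {↑v} := by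
    ext ω
    simp
  have hmeas (v : S) : MeasurableSet (restrictLe (π := fun _ => X) n ⁻¹' {↑v}) :=
    measurable_restrictLe n (measurableSet_singleton _)
  have hdisj :
      Pairwise (Disjoint on fun v : S => restrictLe (π := fun _ => X) n ⁻¹' {↑v}) :=
    fun v w hvw => (Set.disjoint_singleton.2 (Subtype.coe_injective.ne hvw)).preimage _
  rw [hS, integral_iUnion hmeas hdisj hf.integrableOn, integral_iUnion hmeas hdisj hh.integrableOn]
  refine tsum_congr fun v => ?_
  by_cases hv : ∃ path, restrictLe (π := fun _ => X) n path = v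
  · obtain ⟨path, hpath⟩ := hv
    rw [← hpath, preimage_restrictLe_singleton]
    exact hcyl path
  · have hempty : restrictLe (π := fun _ => X) n ⁻¹' {↑v} = ∅ :=
      Set.eq_empty_of_forall_notMem fun ω hω => hv ⟨ω, hω⟩
    simp [hempty]

theorem IsHarmonic.setIntegral_pathCylinder_succ {μ : Measure (ℕ → X)} [IsFiniteMeasure μ]
    (hμ : IsMarkovChainLaw p x μ) (hg : IsHarmonic p g) (hgC : ∀ z, |g z| ≤ C) (n : ℕ)
    (path : ℕ → X) :
    ∫ ω in pathCylinder n path, g (ω (n + 1)) ∂μ = ∫ ω in pathCylinder n path, g (ω n) ∂μ := by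
  calc ∫ ω in pathCylinder n path, g (ω (n + 1)) ∂μ
      = ∑' y, ∫ ω in pathCylinder (n + 1) (update path (n + 1) y), g (ω (n + 1)) ∂μ := by
        conv_lhs => rw [pathCylinder_eq_iUnion]
        exact integral_iUnion (fun y => measurableSet_pathCylinder _ _)
          (pairwise_disjoint_pathCylinder_update n path)
          (integrable_comp_eval μ hgC (n + 1)).integrableOn
    _ = ∑' y, μ.real (pathCylinder n path) * ((p (path n) {y}).toReal * g y) := by
        refine tsum_congr fun y => ?_
        rw [setIntegral_pathCylinder_comp_eval μ g le_rfl, update_self, measureReal_def,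
          hμ.measure_pathCylinder_update, ENNReal.toReal_mul, measureReal_def]
        ring
    _ = ∫ ω in pathCylinder n path, g (ω n) ∂μ := by
        rw [tsum_mul_left, ← hg, setIntegral_pathCylinder_comp_eval μ g le_rfl]

theorem IsHarmonic.martingale_comp_eval {μ : Measure (ℕ → X)} [IsFiniteMeasure μ]
    (hμ : IsMarkovChainLaw p x μ) (hg : IsHarmonic p g) (hgC : ∀ z, |g z| ≤ C) :
    Martingale (fun n ω => g (ω n)) (Filtration.piLE (X := fun _ => X)) μ := by
  refine martingale_of_setIntegral_eq_succ (fun n => ?_) (integrable_comp_eval μ hgC)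
    fun n s hs => setIntegral_eq_of_forall_pathCylinder μ (integrable_comp_eval μ hgC n)
      (integrable_comp_eval μ hgC (n + 1))
      (fun path => (hg.setIntegral_pathCylinder_succ hμ hgC n path).symm) hs
  have heval : Measurable[Filtration.piLE n] fun ω : ℕ → X => ω n := fun t ht =>
    ⟨_, measurable_pi_apply (X := fun _ : Set.Iic n => X) ⟨n, Set.self_mem_Iic⟩ ht, rfl⟩
  exact ((measurable_of_countable g).comp heval).stronglyMeasurable

theorem IsHarmonic.integral_comp_eval {μ : Measure (ℕ → X)} [IsProbabilityMeasure μ]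
    (hμ : IsMarkovChainLaw p x μ) (hg : IsHarmonic p g) (hgC : ∀ z, |g z| ≤ C) (n : ℕ) :
    ∫ ω, g (ω n) ∂μ = g x :=
  calc ∫ ω, g (ω n) ∂μ = ∫ ω, g (ω 0) ∂μ := by
        simpa using ((hg.martingale_comp_eval hμ hgC).setIntegral_eq (Nat.zero_le n)
          MeasurableSet.univ).symm
    _ = g x := by
        rw [integral_congr_ae (hμ.ae_eval_zero.mono fun ω hω => congrArg g hω)]
        simp

theorem IsHarmonic.integral_eq_of_ae_tendsto {μ : Measure (ℕ → X)} [IsProbabilityMeasure μ]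
    (hμ : IsMarkovChainLaw p x μ) (hg : IsHarmonic p g) (hgC : ∀ z, |g z| ≤ C) {F : (ℕ → X) → ℝ}
    (hF : ∀ᵐ ω ∂μ, Tendsto (fun n => g (ω n)) atTop (𝓝 (F ω))) :
    ∫ ω, F ω ∂μ = g x := by
  refine tendsto_nhds_unique (tendsto_integral_of_dominated_convergence (fun _ => C)
    (fun n => (integrable_comp_eval μ hgC n).aestronglyMeasurable) (integrable_const C)
    (fun n => .of_forall fun ω => hgC (ω n)) hF) ?_
  simp only [hg.integral_comp_eval hμ hgC]
  exact tendsto_const_nhds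

end MarkovChain

theorem stationary_space_convergence_general
    {X : Type*} [Countable X] [MeasurableSpace X] [MeasurableSingletonClass X]
    (p : X → Measure X)
    (K : Type*) [TopologicalSpace K] [CompactSpace K] [MetrizableSpace K]
    [MeasurableSpace K] [BorelSpace K]
    (κ : X → Measure K) (hκprob : ∀ x, IsProbabilityMeasure (κ x))
    -- stationarity: κ_x = Σ_y p(x,y)·κ_y
    (hstat : ∀ (x : X) (s : Set K), MeasurableSet s →
      κ x s = ∑' y : X, p x {y} * κ y s)
    -- ℙ_x : law of the chain started at x (Ionescu–Tulcea), via cylinder probabilities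
    (P : X → Measure (ℕ → X)) (hPprob : ∀ x, IsProbabilityMeasure (P x))
    (hP : ∀ (x : X) (n : ℕ) (path : ℕ → X),
      P x {ω | ∀ i ≤ n, ω i = path i}
        = (if path 0 = x then 1 else 0) * ∏ i ∈ Finset.range n, p (path i) {path (i + 1)}) :
    ∃ κbar : (ℕ → X) → Measure K,
      -- measurable dependence on the trajectory
      (∀ φ : C(K, ℝ), Measurable fun ω => ∫ ξ, φ ξ ∂(κbar ω)) ∧
      ∀ x : X,
        -- a.s. weak* convergence κ_{X_n} → κ̄
        (∀ᵐ ω ∂(P x), IsProbabilityMeasure (κbar ω) ∧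
          ∀ φ : C(K, ℝ),
            Tendsto (fun n => ∫ ξ, φ ξ ∂(κ (ω n))) atTop (𝓝 (∫ ξ, φ ξ ∂(κbar ω)))) ∧
        -- barycentre identity: E_x[⟨κ̄, φ⟩] = ⟨κ_x, φ⟩
        (∀ φ : C(K, ℝ),
          ∫ ω, (∫ ξ, φ ξ ∂(κbar ω)) ∂(P x) = ∫ ξ, φ ξ ∂(κ x)) := by
  have := hκprob
  have hbdd (φ : C(K, ℝ)) (z : X) : |∫ ξ, φ ξ ∂(κ z)| ≤ ‖φ‖ := abs_integral_le_norm φ (κ z)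
  have hharm (φ : C(K, ℝ)) : IsHarmonic p fun z => ∫ ξ, φ ξ ∂(κ z) :=
    isHarmonic_integral_of_stationary hstat fun z => integrable_continuousMap φ (κ z)
  obtain ⟨u, hu⟩ := exists_dense_seq C(K, ℝ)
  obtain ⟨κbar, hmeas, hlim⟩ := exists_measurable_tendsto_integral (fun n (ω : ℕ → X) => κ (ω n))
    hu fun φ n => (measurable_of_countable fun z => ∫ ξ, φ ξ ∂(κ z)).comp (measurable_pi_apply n)
  refine ⟨κbar, hmeas, fun x => ?_⟩
  have := hPprob x
  have hae : ∀ᵐ ω ∂(P x), IsProbabilityMeasure (κbar ω) ∧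
      ∀ φ : C(K, ℝ), Tendsto (fun n => ∫ ξ, φ ξ ∂(κ (ω n))) atTop (𝓝 (∫ ξ, φ ξ ∂(κbar ω))) := by
    filter_upwards [ae_all_iff.2 fun i => ((hharm (u i)).martingale_comp_eval (hP x)
      (hbdd (u i))).exists_ae_tendsto_of_abs_le fun n ω => hbdd (u i) (ω n)] with ω hω
    exact hlim ω hω
  exact ⟨hae, fun φ => (hharm φ).integral_eq_of_ae_tendsto (hP x) (hbdd φ)
    (hae.mono fun ω hω => hω.2 φ)⟩

/-- Proposition 3.2. For a Markov chain on a countable state space and a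
compact metrizable `P`-stationary space `(K, κ)`, for every starting point `x`, almost every
trajectory admits a weak* limit `κ̄` of the measures `κ_{X_n}`, depending measurably on the
trajectory, and the barycentre of `κ̄` under `ℙ_x` is `κ_x`. -/
theorem stationary_space_convergence
    {X : Type*} [Countable X] [MeasurableSpace X] [MeasurableSingletonClass X]
    (p : X → Measure X) (hp : ∀ x, IsProbabilityMeasure (p x))
    (K : Type*) [TopologicalSpace K] [CompactSpace K] [MetrizableSpace K]
    [MeasurableSpace K] [BorelSpace K]
    (κ : X → Measure K) (hκprob : ∀ x, IsProbabilityMeasure (κ x))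
    -- stationarity: κ_x = Σ_y p(x,y)·κ_y
    (hstat : ∀ (x : X) (s : Set K), MeasurableSet s →
      κ x s = ∑' y : X, p x {y} * κ y s)
    -- ℙ_x : law of the chain started at x (Ionescu–Tulcea), via cylinder probabilities
    (P : X → Measure (ℕ → X)) (hPprob : ∀ x, IsProbabilityMeasure (P x))
    (hP : ∀ (x : X) (n : ℕ) (path : ℕ → X),
      P x {ω | ∀ i ≤ n, ω i = path i}
        = (if path 0 = x then 1 else 0) * ∏ i ∈ Finset.range n, p (path i) {path (i + 1)}) :
    ∃ κbar : (ℕ → X) → Measure K,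
      -- measurable dependence on the trajectory
      (∀ φ : C(K, ℝ), Measurable fun ω => ∫ ξ, φ ξ ∂(κbar ω)) ∧
      ∀ x : X,
        -- a.s. weak* convergence κ_{X_n} → κ̄
        (∀ᵐ ω ∂(P x), IsProbabilityMeasure (κbar ω) ∧
          ∀ φ : C(K, ℝ),
            Tendsto (fun n => ∫ ξ, φ ξ ∂(κ (ω n))) atTop (𝓝 (∫ ξ, φ ξ ∂(κbar ω)))) ∧
        -- barycentre identity: E_x[⟨κ̄, φ⟩] = ⟨κ_x, φ⟩
        (∀ φ : C(K, ℝ),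
          ∫ ω, (∫ ξ, φ ξ ∂(κbar ω)) ∂(P x) = ∫ ξ, φ ξ ∂(κ x)) :=
  stationary_space_convergence_general p K κ hκprob hstat P hPprob hP

end BMC
end

section
/- Proposition 3.9: Let X̄ be a Dirichlet regular compactification of the countable state space X of a Markov chain with transition probabilities p(x,·), with boundary ∂X and harmonic measures (κ_x)_{x∈X}. Suppose θ_n are Borel probability measures on X̄, each supported on X, converging weakly to a Borel probability measure θ_∞ with θ_∞(X) = 0 (i.e. θ_∞ is supported on ∂X). Then the measures κ_{θ_n} = Σ_{x∈X} θ_n({x})·κ_x (probability measures on X̄ concentrated on ∂X) also converge weakly to θ_∞. -/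
/-!
For continuous `φ` on `X̄`, let `f` be the harmonic extension of `φ|∂X`. Since `κ_x` lives on `∂X`,
where `f = φ`, we get `∫ φ dκ_x = f(x)`, hence `∫ φ dκ_{θ_n} = ∫ f dθ_n`. Weak convergence gives
`∫ f dθ_n → ∫ f dθ_∞`, and `∫ f dθ_∞ = ∫ φ dθ_∞` because `θ_∞` also lives on `∂X`.
-/

open MeasureTheory Filter Topology TopologicalSpace
open scoped ENNReal NNReal Classical

namespace BMC

section

variable {α E : Type*} [MeasurableSpace α] [NormedAddCommGroup E] [NormedSpace ℝ E]
  {μ : Measure α} {s : Set α}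

lemma integral_congr_of_measure_eq_zero_of_eqOn_compl {f g : α → E} (hs : μ s = 0)
    (hfg : Set.EqOn f g sᶜ) : ∫ x, f x ∂μ = ∫ x, g x ∂μ :=
  integral_congr_ae <| (measure_eq_zero_iff_ae_notMem.1 hs).mono hfg

lemma integral_eq_tsum_of_ae_mem_countable [CompleteSpace E] [MeasurableSingletonClass α] {f : α → E}
    (hs : s.Countable) (hμs : ∀ᵐ x ∂μ, x ∈ s) (hf : Integrable f μ) :
    ∫ x, f x ∂μ = ∑' x : s, μ.real {(x : α)} • f x := by
  rw [← setIntegral_countable f hs hf.integrableOn, Measure.restrict_eq_self_of_ae_mem hμs]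

end

theorem dirichlet_regular_convergence_general
    (Xb : Type*) [TopologicalSpace Xb] [CompactSpace Xb] [MetrizableSpace Xb]
    [MeasurableSpace Xb] [BorelSpace Xb]
    (Xs : Set Xb) (hXc : Xs.Countable)
    -- transition probabilities of the chain on X, supported on X
    (p : Xb → Measure Xb)
    -- Dirichlet regularity: unique continuous harmonic extension of boundary data
    (hDir : ∀ φ : C(↥(Xsᶜ), ℝ), ∃! f : C(Xb, ℝ),
      (∀ ξ : ↥(Xsᶜ), f ξ = φ ξ) ∧ ∀ x ∈ Xs, f x = ∫ y, f y ∂(p x))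
    -- harmonic measures: κ_x is the probability measure on ∂X with ∫ f dκ_x = f(x)
    -- for every continuous function f on X̄ which is harmonic on X
    (κ : Xb → Measure Xb)
    (hκbd : ∀ x ∈ Xs, κ x Xs = 0)
    (hκ : ∀ x ∈ Xs, ∀ f : C(Xb, ℝ),
      (∀ z ∈ Xs, f z = ∫ y, f y ∂(p z)) → ∫ ξ, f ξ ∂(κ x) = f x)
    -- the measures θ_n, supported on X, converge weakly to θ_∞ supported on ∂X
    (θ : ℕ → Measure Xb) (hθprob : ∀ n, IsProbabilityMeasure (θ n))
    (hθsupp : ∀ n, θ n Xs = 1)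
    (θinf : Measure Xb) (hθinfbd : θinf Xs = 0)
    (hconv : ∀ φ : C(Xb, ℝ),
      Tendsto (fun n => ∫ ξ, φ ξ ∂(θ n)) atTop (𝓝 (∫ ξ, φ ξ ∂θinf))) :
    -- conclusion: κ_{θ_n} → θ_∞ weakly
    ∀ φ : C(Xb, ℝ),
      Tendsto (fun n => ∑' x : ↥Xs, (θ n {(x : Xb)}).toReal * ∫ ξ, φ ξ ∂(κ x))
        atTop (𝓝 (∫ ξ, φ ξ ∂θinf)) := by
  intro φ
  obtain ⟨f, ⟨hf_bdry, hf_harm⟩, -⟩ := hDir (φ.restrict Xsᶜ)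
  have hfφ : Set.EqOn f φ Xsᶜ := fun ξ hξ => hf_bdry ⟨ξ, hξ⟩
  have hκφ : ∀ x ∈ Xs, ∫ ξ, φ ξ ∂(κ x) = f x := fun x hx =>
    (integral_congr_of_measure_eq_zero_of_eqOn_compl (hκbd x hx) hfφ.symm).trans
      (hκ x hx f hf_harm)
  have hθf : ∀ n, ∑' x : ↥Xs, (θ n {(x : Xb)}).toReal * ∫ ξ, φ ξ ∂(κ x) = ∫ ξ, f ξ ∂(θ n) := by
    intro n
    have hθXs : ∀ᵐ ξ ∂(θ n), ξ ∈ Xs :=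
      (mem_ae_iff_prob_eq_one hXc.measurableSet).2 (hθsupp n)
    rw [integral_eq_tsum_of_ae_mem_countable hXc hθXs (f.continuous.integrable_of_hasCompactSupport
      (HasCompactSupport.of_compactSpace f))]
    exact tsum_congr fun x => by rw [hκφ x x.2, smul_eq_mul, measureReal_def]
  simpa only [hθf, integral_congr_of_measure_eq_zero_of_eqOn_compl hθinfbd hfφ] using hconv f

/-- Proposition 3.9. Let `X̄` be a Dirichlet regular compactification of the
countable state space `X` of a Markov chain, with harmonic measures `(κ_x)`. If probability
measures `θ_n` supported on `X` converge weakly to a probability measure `θ_∞` supported on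
the boundary `∂X = X̄ \ X`, then the harmonic measures `κ_{θ_n} = Σ_x θ_n({x})·κ_x` also
converge weakly to `θ_∞`. -/
theorem dirichlet_regular_convergence
    (Xb : Type*) [TopologicalSpace Xb] [CompactSpace Xb] [MetrizableSpace Xb]
    [MeasurableSpace Xb] [BorelSpace Xb]
    (Xs : Set Xb) (hXc : Xs.Countable) (hXd : Dense Xs)
    (hXiso : ∀ x ∈ Xs, IsOpen ({x} : Set Xb))
    -- transition probabilities of the chain on X, supported on X
    (p : Xb → Measure Xb) (hp : ∀ x ∈ Xs, IsProbabilityMeasure (p x))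
    (hpsupp : ∀ x ∈ Xs, p x Xs = 1)
    -- Dirichlet regularity: unique continuous harmonic extension of boundary data
    (hDir : ∀ φ : C(↥(Xsᶜ), ℝ), ∃! f : C(Xb, ℝ),
      (∀ ξ : ↥(Xsᶜ), f ξ = φ ξ) ∧ ∀ x ∈ Xs, f x = ∫ y, f y ∂(p x))
    -- harmonic measures: κ_x is the probability measure on ∂X with ∫ f dκ_x = f(x)
    -- for every continuous function f on X̄ which is harmonic on X
    (κ : Xb → Measure Xb) (hκprob : ∀ x ∈ Xs, IsProbabilityMeasure (κ x))
    (hκbd : ∀ x ∈ Xs, κ x Xs = 0)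
    (hκ : ∀ x ∈ Xs, ∀ f : C(Xb, ℝ),
      (∀ z ∈ Xs, f z = ∫ y, f y ∂(p z)) → ∫ ξ, f ξ ∂(κ x) = f x)
    -- the measures θ_n, supported on X, converge weakly to θ_∞ supported on ∂X
    (θ : ℕ → Measure Xb) (hθprob : ∀ n, IsProbabilityMeasure (θ n))
    (hθsupp : ∀ n, θ n Xs = 1)
    (θinf : Measure Xb) (hθinfprob : IsProbabilityMeasure θinf) (hθinfbd : θinf Xs = 0)
    (hconv : ∀ φ : C(Xb, ℝ),
      Tendsto (fun n => ∫ ξ, φ ξ ∂(θ n)) atTop (𝓝 (∫ ξ, φ ξ ∂θinf))) :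
    -- conclusion: κ_{θ_n} → θ_∞ weakly
    ∀ φ : C(Xb, ℝ),
      Tendsto (fun n => ∑' x : ↥Xs, (θ n {(x : Xb)}).toReal * ∫ ξ, φ ξ ∂(κ x))
        atTop (𝓝 (∫ ξ, φ ξ ∂θinf)) :=
  dirichlet_regular_convergence_general Xb Xs hXc p hDir κ hκbd hκ θ hθprob hθsupp θinf hθinfbd
    hconv

end BMC
end

section
/- Corollary 3.10: Let X̄ be a Dirichlet regular compactification of the countable state space X of a Markov chain with transition probabilities p(x,·), with boundary ∂X and harmonic measures (κ_x)_{x∈X}. Let θ_n be Borel probability measures on X̄, each supported on X, which escape to infinity: θ_n({x}) → 0 for every x ∈ X. Then the sequence (θ_n) converges weakly in the space of probability measures on X̄ if and only if the sequence κ_{θ_n} = Σ_{x∈X} θ_n({x})·κ_x converges weakly; in that case the two limits coincide and are supported on ∂X. -/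
open MeasureTheory Filter Topology TopologicalSpace

/-!
By Dirichlet regularity, `∫ φ dκ_x = f(x)` for the harmonic extension `f` of `φ|∂X`, so
`κ_{θ_n}(φ) - θ_n(φ) = θ_n(f - φ)`. The continuous function `f - φ` vanishes on `∂X`; since
the points of `X` are isolated and `X̄` is compact, for every `ε > 0` it exceeds `ε` only on a
finite subset of `X`, which escaping measures eventually ignore. Hence `θ_n(f - φ) → 0`, and
the two sequences have the same weak limits. A limit `μ` satisfies `μ {x} = lim θ_n {x} = 0`
because the indicator of an isolated point is continuous, so `μ X = 0` by countability.
-/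

section

variable {X : Type*} [TopologicalSpace X]

lemma IsCompact.finite_of_subset_isolated {K s : Set X} (hK : IsCompact K) (hKs : K ⊆ s)
    (hs : ∀ x ∈ s, IsOpen ({x} : Set X)) : K.Finite :=
  hK.finite <| isDiscrete_iff_forall_mem_exists_isOpen.2 fun y hy =>
    ⟨{y}, hs y (hKs hy), Set.singleton_inter_of_mem hy⟩

end

section

variable {X : Type*} [MeasurableSpace X] [MeasurableSingletonClass X]

lemma integral_eq_tsum_of_measure_compl_eq_zero {μ : Measure X}
    {s : Set X} (hs : s.Countable) (hμ : μ sᶜ = 0) {f : X → ℝ} (hf : Integrable f μ) :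
    ∫ x, f x ∂μ = ∑' x : s, (μ {(x : X)}).toReal * f x := by
  have hrestrict : μ.restrict s = μ :=
    Measure.restrict_eq_self_of_ae_mem (by simpa using measure_eq_zero_iff_ae_notMem.1 hμ)
  rw [← hrestrict, setIntegral_countable f hs (by rwa [IntegrableOn, hrestrict]), hrestrict]
  rfl

lemma Set.Finite.tendsto_measure_of_tendsto_measure_singleton
    {K : Set X} (hK : K.Finite) {θ : ℕ → Measure X}
    (hθ : ∀ x ∈ K, Tendsto (fun n => θ n {x}) atTop (𝓝 0)) :
    Tendsto (fun n => θ n K) atTop (𝓝 0) := by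
  rw [← hK.coe_toFinset]
  simp_rw [← sum_measure_singleton]
  simpa using tendsto_finsetSum _ fun x hx => hθ x (hK.mem_toFinset.1 hx)

end

section

variable {X : Type*} [TopologicalSpace X] [MeasurableSpace X]

lemma integrable_continuousMap [CompactSpace X] [OpensMeasurableSpace X] (μ : Measure X)
    [IsFiniteMeasure μ] (f : C(X, ℝ)) : Integrable f μ :=
  (BoundedContinuousFunction.mkOfCompact f).integrable μ

lemma ext_of_forall_integral_continuousMap_eq [HasOuterApproxClosed X] [BorelSpace X]
    {μ ν : Measure X} [IsFiniteMeasure μ] [IsFiniteMeasure ν]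
    (h : ∀ f : C(X, ℝ), ∫ x, f x ∂μ = ∫ x, f x ∂ν) : μ = ν :=
  ext_of_forall_integral_eq_of_IsFiniteMeasure fun f => h f.toContinuousMap

lemma measure_singleton_eq_zero_of_tendsto_integral [T1Space X] [MeasurableSingletonClass X]
    {x : X} (hx : IsOpen ({x} : Set X)) {θ : ℕ → Measure X} {μ : Measure X} [IsFiniteMeasure μ]
    (hθμ : ∀ φ : C(X, ℝ), Tendsto (fun n => ∫ ξ, φ ξ ∂θ n) atTop (𝓝 (∫ ξ, φ ξ ∂μ)))
    (hesc : Tendsto (fun n => θ n {x}) atTop (𝓝 0)) : μ {x} = 0 := by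
  let φ : C(X, ℝ) :=
    (BoundedContinuousFunction.indicator {x} ⟨isClosed_singleton, hx⟩).toContinuousMap
  have hφ : ∀ σ : Measure X, ∫ ξ, φ ξ ∂σ = σ.real {x} := fun σ => by
    rw [← integral_indicator_one (measurableSet_singleton x)]
    rfl
  have hlim : Tendsto (fun n => ∫ ξ, φ ξ ∂θ n) atTop (𝓝 0) := by
    simpa [hφ, Function.comp_def, measureReal_def] using
      (ENNReal.tendsto_toReal ENNReal.zero_ne_top).comp hesc
  have hμx : μ.real {x} = 0 := by rw [← hφ μ]; exact tendsto_nhds_unique (hθμ φ) hlim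
  exact (measureReal_eq_zero_iff).1 hμx

lemma measure_eq_zero_of_tendsto_integral [T1Space X] [MeasurableSingletonClass X]
    {s : Set X} (hsc : s.Countable) (hs : ∀ x ∈ s, IsOpen ({x} : Set X)) {θ : ℕ → Measure X}
    {μ : Measure X} [IsFiniteMeasure μ]
    (hθμ : ∀ φ : C(X, ℝ), Tendsto (fun n => ∫ ξ, φ ξ ∂θ n) atTop (𝓝 (∫ ξ, φ ξ ∂μ)))
    (hesc : ∀ x ∈ s, Tendsto (fun n => θ n {x}) atTop (𝓝 0)) : μ s = 0 := by
  rw [← Set.biUnion_of_singleton s, measure_biUnion_null_iff hsc]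
  exact fun x hx => measure_singleton_eq_zero_of_tendsto_integral (hs x hx) hθμ (hesc x hx)

variable [CompactSpace X] [OpensMeasurableSpace X] [MeasurableSingletonClass X]

lemma tendsto_integral_zero_of_escape {s : Set X} (hs : ∀ x ∈ s, IsOpen ({x} : Set X))
    {θ : ℕ → Measure X} [∀ n, IsProbabilityMeasure (θ n)]
    (hesc : ∀ x ∈ s, Tendsto (fun n => θ n {x}) atTop (𝓝 0))
    {g : C(X, ℝ)} (hg : ∀ x ∉ s, g x = 0) :
    Tendsto (fun n => ∫ x, g x ∂θ n) atTop (𝓝 0) := by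
  rw [Metric.tendsto_nhds]
  intro ε hε
  set K := {x | ε / 2 ≤ |g x|}
  have hKclosed : IsClosed K := isClosed_le continuous_const (continuous_abs.comp g.continuous)
  have hKs : K ⊆ s := fun x hx => by
    by_contra hxs
    have hx' : ε / 2 ≤ |g x| := hx
    rw [hg x hxs, abs_zero] at hx'
    linarith
  have hKfin : K.Finite := hKclosed.isCompact.finite_of_subset_isolated hKs hs
  set M := ‖BoundedContinuousFunction.mkOfCompact g‖
  have hgM : ∀ x, ‖g x‖ ≤ M := (BoundedContinuousFunction.mkOfCompact g).norm_coe_le_norm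
  have hθK : Tendsto (fun n => (θ n).real K) atTop (𝓝 0) := by
    simpa [Function.comp_def, measureReal_def] using
      (ENNReal.tendsto_toReal ENNReal.zero_ne_top).comp
        (hKfin.tendsto_measure_of_tendsto_measure_singleton fun x hx => hesc x (hKs hx))
  filter_upwards [(hθK.const_mul M).eventually_lt_const
    (by rw [mul_zero]; exact half_pos hε)] with n hn
  have hKc : ‖∫ x in Kᶜ, g x ∂θ n‖ ≤ ε / 2 * (θ n).real Kᶜ :=
    norm_setIntegral_le_of_norm_le_const (measure_lt_top _ _) fun x hx =>
      (not_le.1 (Set.mem_compl_iff K x |>.1 hx)).le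
  have hK : ‖∫ x in K, g x ∂θ n‖ ≤ M * (θ n).real K :=
    norm_setIntegral_le_of_norm_le_const (measure_lt_top _ _) fun x _ => hgM x
  have hKc_le : ε / 2 * (θ n).real Kᶜ ≤ ε / 2 :=
    mul_le_of_le_one_right (half_pos hε).le measureReal_le_one
  rw [dist_zero_right, ← integral_add_compl hKclosed.measurableSet
    (integrable_continuousMap (θ n) g)]
  calc ‖∫ x in K, g x ∂θ n + ∫ x in Kᶜ, g x ∂θ n‖
      ≤ ‖∫ x in K, g x ∂θ n‖ + ‖∫ x in Kᶜ, g x ∂θ n‖ := norm_add_le _ _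
    _ < ε := by linarith

lemma tendsto_tsum_mul_sub_integral_of_eqOn_compl {s : Set X} (hsc : s.Countable)
    (hs : ∀ x ∈ s, IsOpen ({x} : Set X)) {θ : ℕ → Measure X} [∀ n, IsProbabilityMeasure (θ n)]
    (hθ : ∀ n, θ n sᶜ = 0) (hesc : ∀ x ∈ s, Tendsto (fun n => θ n {x}) atTop (𝓝 0))
    {f φ : C(X, ℝ)} (hfφ : ∀ x ∉ s, f x = φ x) :
    Tendsto (fun n => ∑' x : s, (θ n {(x : X)}).toReal * f x - ∫ x, φ x ∂θ n) atTop (𝓝 0) := by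
  have hdiff : ∀ n, ∑' x : s, (θ n {(x : X)}).toReal * f x - ∫ x, φ x ∂θ n =
      ∫ x, (f - φ) x ∂θ n := fun n => by
    rw [← integral_eq_tsum_of_measure_compl_eq_zero hsc (hθ n) (integrable_continuousMap _ f),
      ← integral_sub (integrable_continuousMap _ f) (integrable_continuousMap _ φ)]
    rfl
  simp_rw [hdiff]
  exact tendsto_integral_zero_of_escape hs hesc fun x hx => sub_eq_zero.2 (hfφ x hx)

end

namespace BMC

theorem dirichlet_regular_escape_iff_general
    (Xb : Type*) [TopologicalSpace Xb] [CompactSpace Xb] [MetrizableSpace Xb]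
    [MeasurableSpace Xb] [BorelSpace Xb]
    (Xs : Set Xb) (hXc : Xs.Countable)
    (hXiso : ∀ x ∈ Xs, IsOpen ({x} : Set Xb))
    (p : Xb → Measure Xb)
    (hDir : ∀ φ : C(↥(Xsᶜ), ℝ), ∃! f : C(Xb, ℝ),
      (∀ ξ : ↥(Xsᶜ), f ξ = φ ξ) ∧ ∀ x ∈ Xs, f x = ∫ y, f y ∂(p x))
    (κ : Xb → Measure Xb)
    (hκbd : ∀ x ∈ Xs, κ x Xs = 0)
    (hκ : ∀ x ∈ Xs, ∀ f : C(Xb, ℝ),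
      (∀ z ∈ Xs, f z = ∫ y, f y ∂(p z)) → ∫ ξ, f ξ ∂(κ x) = f x)
    (θ : ℕ → Measure Xb) (hθprob : ∀ n, IsProbabilityMeasure (θ n))
    (hθsupp : ∀ n, θ n Xs = 1)
    -- escape to infinity
    (hesc : ∀ x ∈ Xs, Tendsto (fun n => θ n {x}) atTop (𝓝 0)) :
    -- (θ_n) converges weakly iff (κ_{θ_n}) converges weakly ...
    ((∃ μ : Measure Xb, IsProbabilityMeasure μ ∧
        ∀ φ : C(Xb, ℝ),
          Tendsto (fun n => ∫ ξ, φ ξ ∂(θ n)) atTop (𝓝 (∫ ξ, φ ξ ∂μ)))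
      ↔ (∃ μ : Measure Xb, IsProbabilityMeasure μ ∧
        ∀ φ : C(Xb, ℝ),
          Tendsto (fun n => ∑' x : ↥Xs, (θ n {(x : Xb)}).toReal * ∫ ξ, φ ξ ∂(κ x))
            atTop (𝓝 (∫ ξ, φ ξ ∂μ)))) ∧
    -- ... and in that case the limits coincide and are supported on the boundary
    (∀ μ ν : Measure Xb, IsProbabilityMeasure μ → IsProbabilityMeasure ν →
      (∀ φ : C(Xb, ℝ),
        Tendsto (fun n => ∫ ξ, φ ξ ∂(θ n)) atTop (𝓝 (∫ ξ, φ ξ ∂μ))) →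
      (∀ φ : C(Xb, ℝ),
        Tendsto (fun n => ∑' x : ↥Xs, (θ n {(x : Xb)}).toReal * ∫ ξ, φ ξ ∂(κ x))
          atTop (𝓝 (∫ ξ, φ ξ ∂ν))) →
      μ = ν ∧ μ Xs = 0) := by
  have hθ : ∀ n, θ n Xsᶜ = 0 := fun n => (prob_compl_eq_zero_iff hXc.measurableSet).2 (hθsupp n)
  have hkey : ∀ φ : C(Xb, ℝ), Tendsto (fun n => dist (∫ ξ, φ ξ ∂θ n)
      (∑' x : ↥Xs, (θ n {(x : Xb)}).toReal * ∫ ξ, φ ξ ∂(κ x))) atTop (𝓝 0) := by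
    intro φ
    obtain ⟨f, ⟨hfφ, hfharm⟩, -⟩ := hDir (φ.restrict Xsᶜ)
    have hκφ : ∀ x : ↥Xs, ∫ ξ, φ ξ ∂(κ x) = f x := fun x => by
      rw [← hκ x x.2 f hfharm]
      refine integral_congr_ae ?_
      filter_upwards [measure_eq_zero_iff_ae_notMem.1 (hκbd x x.2)] with ξ hξ
      exact (hfφ ⟨ξ, hξ⟩).symm
    simp_rw [hκφ, dist_comm _ (∑' x : ↥Xs, _), dist_eq_norm]
    simpa using (tendsto_tsum_mul_sub_integral_of_eqOn_compl hXc hXiso hθ hesc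
      fun ξ hξ => hfφ ⟨ξ, hξ⟩).norm
  refine ⟨exists_congr fun μ => and_congr_right fun _ =>
    forall_congr' fun φ => tendsto_iff_of_dist (hkey φ), ?_⟩
  intro μ ν hμ hν hθμ hκν
  exact ⟨ext_of_forall_integral_continuousMap_eq fun φ =>
      tendsto_nhds_unique ((tendsto_iff_of_dist (hkey φ)).1 (hθμ φ)) (hκν φ),
    measure_eq_zero_of_tendsto_integral hXc hXiso hθμ hesc⟩

/-- Corollary 3.10. In a Dirichlet regular compactification, if probability
measures `θ_n` supported on `X` escape to infinity, then `(θ_n)` converges weakly iff the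
harmonic measures `κ_{θ_n} = Σ_x θ_n({x})·κ_x` converge weakly; in that case the two limits
coincide and are supported on the boundary `∂X`. -/
theorem dirichlet_regular_escape_iff
    (Xb : Type*) [TopologicalSpace Xb] [CompactSpace Xb] [MetrizableSpace Xb]
    [MeasurableSpace Xb] [BorelSpace Xb]
    (Xs : Set Xb) (hXc : Xs.Countable) (hXd : Dense Xs)
    (hXiso : ∀ x ∈ Xs, IsOpen ({x} : Set Xb))
    (p : Xb → Measure Xb) (hp : ∀ x ∈ Xs, IsProbabilityMeasure (p x))
    (hpsupp : ∀ x ∈ Xs, p x Xs = 1)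
    (hDir : ∀ φ : C(↥(Xsᶜ), ℝ), ∃! f : C(Xb, ℝ),
      (∀ ξ : ↥(Xsᶜ), f ξ = φ ξ) ∧ ∀ x ∈ Xs, f x = ∫ y, f y ∂(p x))
    (κ : Xb → Measure Xb) (hκprob : ∀ x ∈ Xs, IsProbabilityMeasure (κ x))
    (hκbd : ∀ x ∈ Xs, κ x Xs = 0)
    (hκ : ∀ x ∈ Xs, ∀ f : C(Xb, ℝ),
      (∀ z ∈ Xs, f z = ∫ y, f y ∂(p z)) → ∫ ξ, f ξ ∂(κ x) = f x)
    (θ : ℕ → Measure Xb) (hθprob : ∀ n, IsProbabilityMeasure (θ n))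
    (hθsupp : ∀ n, θ n Xs = 1)
    -- escape to infinity
    (hesc : ∀ x ∈ Xs, Tendsto (fun n => θ n {x}) atTop (𝓝 0)) :
    -- (θ_n) converges weakly iff (κ_{θ_n}) converges weakly ...
    ((∃ μ : Measure Xb, IsProbabilityMeasure μ ∧
        ∀ φ : C(Xb, ℝ),
          Tendsto (fun n => ∫ ξ, φ ξ ∂(θ n)) atTop (𝓝 (∫ ξ, φ ξ ∂μ)))
      ↔ (∃ μ : Measure Xb, IsProbabilityMeasure μ ∧
        ∀ φ : C(Xb, ℝ),
          Tendsto (fun n => ∑' x : ↥Xs, (θ n {(x : Xb)}).toReal * ∫ ξ, φ ξ ∂(κ x))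
            atTop (𝓝 (∫ ξ, φ ξ ∂μ)))) ∧
    -- ... and in that case the limits coincide and are supported on the boundary
    (∀ μ ν : Measure Xb, IsProbabilityMeasure μ → IsProbabilityMeasure ν →
      (∀ φ : C(Xb, ℝ),
        Tendsto (fun n => ∫ ξ, φ ξ ∂(θ n)) atTop (𝓝 (∫ ξ, φ ξ ∂μ))) →
      (∀ φ : C(Xb, ℝ),
        Tendsto (fun n => ∑' x : ↥Xs, (θ n {(x : Xb)}).toReal * ∫ ξ, φ ξ ∂(κ x))
          atTop (𝓝 (∫ ξ, φ ξ ∂ν))) →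
      μ = ν ∧ μ Xs = 0) :=
  dirichlet_regular_escape_iff_general Xb Xs hXc hXiso p hDir κ hκbd hκ θ hθprob hθsupp hesc

end BMC
end
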